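/- Let ξ > 0 and δ > 0, and let ν be the probability measure on ℝ with density ψ(·; ξ, δ) with respect to Lebesgue measure. Then the pushforward of ν under the map g(x) = δ(x−ξ)²/(ξ²x) (defined for x > 0, extended arbitrarily measurably to x ≤ 0) is the Gamma distribution with shape 1/2 and rate 1/2, i.e., the chi-squared distribution with one degree of freedom. -/

import Mathlib

open MeasureTheory Real ProbabilityTheory Set

/-- The inverse Gaussian density with mean `ξ` and shape `δ`. -/
noncomputable def invGaussPDF (ξ δ x : ℝ) : ℝ :=
  if 0 < x then
    Real.sqrt (δ / (2 * Real.pi * x ^ 3)) * Real.exp (-(δ * (x - ξ) ^ 2) / (2 * ξ ^ 2 * x))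
  else 0

section Aux

variable {ξ δ : ℝ}

/-- midpoint of the two roots -/
noncomputable def igB (ξ δ y : ℝ) : ℝ := ξ + ξ ^ 2 * y / (2 * δ)

noncomputable def igS (ξ δ y : ℝ) : ℝ := Real.sqrt (igB ξ δ y ^ 2 - ξ ^ 2)

noncomputable def igP (ξ δ y : ℝ) : ℝ := igB ξ δ y + igS ξ δ y

noncomputable def igM (ξ δ y : ℝ) : ℝ := igB ξ δ y - igS ξ δ y

lemma igB_ge (hξ : 0 < ξ) (hδ : 0 < δ) {y : ℝ} (hy : 0 ≤ y) : ξ ≤ igB ξ δ y := by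
  have : 0 ≤ ξ ^ 2 * y / (2 * δ) := by positivity
  unfold igB; linarith

lemma igB_gt (hξ : 0 < ξ) (hδ : 0 < δ) {y : ℝ} (hy : 0 < y) : ξ < igB ξ δ y := by
  have : 0 < ξ ^ 2 * y / (2 * δ) := by positivity
  unfold igB; linarith

lemma igS_nonneg : 0 ≤ igS ξ δ y := Real.sqrt_nonneg _

lemma igS_sq (hξ : 0 < ξ) (hδ : 0 < δ) {y : ℝ} (hy : 0 ≤ y) :
    igS ξ δ y ^ 2 = igB ξ δ y ^ 2 - ξ ^ 2 := by
  have hb := igB_ge hξ hδ hy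
  exact Real.sq_sqrt (by nlinarith)

lemma igS_lt_igB (hξ : 0 < ξ) (hδ : 0 < δ) {y : ℝ} (hy : 0 ≤ y) :
    igS ξ δ y < igB ξ δ y := by
  have hb := igB_ge hξ hδ hy
  have hs := igS_sq hξ hδ hy
  have hsn : (0:ℝ) ≤ igS ξ δ y := igS_nonneg
  nlinarith

lemma igM_pos (hξ : 0 < ξ) (hδ : 0 < δ) {y : ℝ} (hy : 0 ≤ y) : 0 < igM ξ δ y :=
  sub_pos.mpr (igS_lt_igB hξ hδ hy)

lemma igP_pos (hξ : 0 < ξ) (hδ : 0 < δ) {y : ℝ} (hy : 0 ≤ y) : 0 < igP ξ δ y := by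
  have := igM_pos hξ hδ hy
  have : (0:ℝ) ≤ igS ξ δ y := igS_nonneg
  unfold igP; unfold igM at *; linarith

lemma igM_le_igP : igM ξ δ y ≤ igP ξ δ y := by
  have : (0:ℝ) ≤ igS ξ δ y := igS_nonneg
  unfold igM igP; linarith

lemma igM_mul_igP (hξ : 0 < ξ) (hδ : 0 < δ) {y : ℝ} (hy : 0 ≤ y) :
    igM ξ δ y * igP ξ δ y = ξ ^ 2 := by
  have hs := igS_sq hξ hδ hy
  unfold igM igP; nlinarith

lemma ig_quad (hξ : 0 < ξ) (hδ : 0 < δ) {y : ℝ} (hy : 0 ≤ y) (x : ℝ) :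
    δ * ((x - igM ξ δ y) * (x - igP ξ δ y)) = δ * (x - ξ) ^ 2 - y * (ξ ^ 2 * x) := by
  have hs := igS_sq hξ hδ hy
  have h1 : δ * ((x - igM ξ δ y) * (x - igP ξ δ y))
      = δ * ((x - igB ξ δ y) ^ 2 - igS ξ δ y ^ 2) := by unfold igM igP; ring
  rw [h1, hs]
  unfold igB
  field_simp
  ring

lemma igP_ge_xi (hξ : 0 < ξ) (hδ : 0 < δ) {y : ℝ} (hy : 0 ≤ y) : ξ ≤ igP ξ δ y := by
  have := igB_ge hξ hδ hy
  have : (0:ℝ) ≤ igS ξ δ y := igS_nonneg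
  unfold igP; linarith

lemma igM_le_xi (hξ : 0 < ξ) (hδ : 0 < δ) {y : ℝ} (hy : 0 ≤ y) : igM ξ δ y ≤ ξ := by
  have hmp := igM_mul_igP hξ hδ hy
  have hp := igP_ge_xi hξ hδ hy
  have hm := igM_pos hξ hδ hy
  nlinarith

lemma xi_lt_igP (hξ : 0 < ξ) (hδ : 0 < δ) {y : ℝ} (hy : 0 < y) : ξ < igP ξ δ y := by
  have := igB_gt hξ hδ hy
  have : (0:ℝ) ≤ igS ξ δ y := igS_nonneg
  unfold igP; linarith

lemma igM_lt_xi (hξ : 0 < ξ) (hδ : 0 < δ) {y : ℝ} (hy : 0 < y) : igM ξ δ y < ξ := by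
  have hmp := igM_mul_igP hξ hδ hy.le
  have hp := xi_lt_igP hξ hδ hy
  have hm := igM_pos hξ hδ hy.le
  nlinarith

lemma igP_mono (hξ : 0 < ξ) (hδ : 0 < δ) {y y' : ℝ} (hy : 0 ≤ y) (h : y ≤ y') :
    igP ξ δ y ≤ igP ξ δ y' := by
  have hb : igB ξ δ y ≤ igB ξ δ y' := by
    unfold igB; gcongr
  have hb0 : 0 < igB ξ δ y := lt_of_lt_of_le hξ (igB_ge hξ hδ hy)
  have hs : igS ξ δ y ≤ igS ξ δ y' := by
    apply Real.sqrt_le_sqrt; nlinarith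
  unfold igP; linarith

lemma igP_strictMono (hξ : 0 < ξ) (hδ : 0 < δ) {y y' : ℝ} (hy : 0 ≤ y) (h : y < y') :
    igP ξ δ y < igP ξ δ y' := by
  have hb : igB ξ δ y < igB ξ δ y' := by
    unfold igB
    have : ξ ^ 2 * y / (2 * δ) < ξ ^ 2 * y' / (2 * δ) := by gcongr
    linarith
  have hb0 : 0 < igB ξ δ y := lt_of_lt_of_le hξ (igB_ge hξ hδ hy)
  have hs : igS ξ δ y ≤ igS ξ δ y' := by
    apply Real.sqrt_le_sqrt; nlinarith
  unfold igP; linarith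

lemma igM_eq (hξ : 0 < ξ) (hδ : 0 < δ) {y : ℝ} (hy : 0 ≤ y) :
    igM ξ δ y = ξ ^ 2 / igP ξ δ y :=
  eq_div_of_mul_eq (igP_pos hξ hδ hy).ne' (igM_mul_igP hξ hδ hy)

lemma igM_anti (hξ : 0 < ξ) (hδ : 0 < δ) {y y' : ℝ} (hy : 0 ≤ y) (h : y ≤ y') :
    igM ξ δ y' ≤ igM ξ δ y := by
  have hp := igP_pos hξ hδ hy
  have hp' := igP_pos hξ hδ (hy.trans h)
  have hmono := igP_mono hξ hδ hy h
  rw [igM_eq hξ hδ hy, igM_eq hξ hδ (hy.trans h), div_le_div_iff₀ hp' hp]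
  nlinarith

lemma igM_strictAnti (hξ : 0 < ξ) (hδ : 0 < δ) {y y' : ℝ} (hy : 0 ≤ y) (h : y < y') :
    igM ξ δ y' < igM ξ δ y := by
  have hp := igP_pos hξ hδ hy
  have hp' := igP_pos hξ hδ (hy.trans h.le)
  have hmono := igP_strictMono hξ hδ hy h
  rw [igM_eq hξ hδ hy, igM_eq hξ hδ (hy.trans h.le), div_lt_div_iff₀ hp' hp]
  nlinarith [mul_lt_mul_of_pos_left hmono (pow_pos hξ 2)]

/-- characterization of the sublevel set -/
lemma le_iff_mem_Icc (hξ : 0 < ξ) (hδ : 0 < δ) {y : ℝ} (hy : 0 ≤ y) {x : ℝ} (hx : 0 < x) :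
    δ * (x - ξ) ^ 2 / (ξ ^ 2 * x) ≤ y ↔ igM ξ δ y ≤ x ∧ x ≤ igP ξ δ y := by
  have hq := ig_quad hξ hδ hy x
  have hmp := igM_le_igP (ξ := ξ) (δ := δ) (y := y)
  rw [div_le_iff₀ (by positivity)]
  constructor
  · intro hle
    constructor
    · by_contra hc
      push_neg at hc
      have ha : 0 < igM ξ δ y - x := by linarith
      have hb : 0 < igP ξ δ y - x := by linarith
      nlinarith [mul_pos hδ (mul_pos ha hb)]
    · by_contra hc
      push_neg at hc
      have ha : 0 < x - igM ξ δ y := by linarith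
      have hb : 0 < x - igP ξ δ y := by linarith
      nlinarith [mul_pos hδ (mul_pos ha hb)]
  · rintro ⟨h1, h2⟩
    nlinarith [mul_nonneg (mul_nonneg hδ.le (sub_nonneg.mpr h1)) (sub_nonneg.mpr h2)]

lemma eq_root (hξ : 0 < ξ) (hδ : 0 < δ) {y : ℝ} (hy : 0 ≤ y) {x : ℝ} (hx : 0 < x)
    (h : δ * (x - ξ) ^ 2 / (ξ ^ 2 * x) = y) : x = igM ξ δ y ∨ x = igP ξ δ y := by
  have hq := ig_quad hξ hδ hy x
  rw [div_eq_iff (by positivity : ξ ^ 2 * x ≠ 0)] at h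
  have h0 : (x - igM ξ δ y) * (x - igP ξ δ y) = 0 := by
    have : δ * ((x - igM ξ δ y) * (x - igP ξ δ y)) = 0 := by linarith
    exact (mul_eq_zero.mp this).resolve_left hδ.ne'
  rcases mul_eq_zero.mp h0 with h | h
  · left; linarith
  · right; linarith

lemma g_igP (hξ : 0 < ξ) (hδ : 0 < δ) {y : ℝ} (hy : 0 ≤ y) :
    δ * (igP ξ δ y - ξ) ^ 2 / (ξ ^ 2 * igP ξ δ y) = y := by
  have hp := igP_pos hξ hδ hy
  have hq := ig_quad hξ hδ hy (igP ξ δ y)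
  rw [div_eq_iff (by positivity : ξ ^ 2 * igP ξ δ y ≠ 0)]
  nlinarith

lemma g_igM (hξ : 0 < ξ) (hδ : 0 < δ) {y : ℝ} (hy : 0 ≤ y) :
    δ * (igM ξ δ y - ξ) ^ 2 / (ξ ^ 2 * igM ξ δ y) = y := by
  have hm := igM_pos hξ hδ hy
  have hq := ig_quad hξ hδ hy (igM ξ δ y)
  rw [div_eq_iff (by positivity : ξ ^ 2 * igM ξ δ y ≠ 0)]
  nlinarith

lemma igB_zero : igB ξ δ 0 = ξ := by unfold igB; simp

lemma igS_zero : igS ξ δ 0 = 0 := by unfold igS; rw [igB_zero]; simp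

lemma igP_zero : igP ξ δ 0 = ξ := by unfold igP; rw [igB_zero, igS_zero]; ring

lemma igM_zero : igM ξ δ 0 = ξ := by unfold igM; rw [igB_zero, igS_zero]; ring

/-- derivative of the transformation formula -/
lemma hasDerivAt_formula (hξ : 0 < ξ) {x : ℝ} (hx : 0 < x) :
    HasDerivAt (fun x => δ * (x - ξ) ^ 2 / (ξ ^ 2 * x))
      (δ * (x ^ 2 - ξ ^ 2) / (ξ ^ 2 * x ^ 2)) x := by
  have h1 : HasDerivAt (fun x : ℝ => δ * (x - ξ) ^ 2) (δ * (2 * (x - ξ))) x := by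
    have := (((hasDerivAt_id x).sub_const ξ).pow 2).const_mul δ
    simpa using this
  have h2 : HasDerivAt (fun x : ℝ => ξ ^ 2 * x) (ξ ^ 2) x := by
    simpa using (hasDerivAt_id x).const_mul (ξ ^ 2)
  have h3 := h1.div h2 (by positivity)
  refine h3.congr_deriv ?_
  rw [div_eq_div_iff (by positivity) (by positivity)]
  ring

lemma continuousOn_invGaussPDF (hξ : 0 < ξ) (hδ : 0 < δ) :
    ContinuousOn (invGaussPDF ξ δ) (Ioi 0) := by
  have hc : ContinuousOn (fun x =>
      Real.sqrt (δ / (2 * Real.pi * x ^ 3)) * Real.exp (-(δ * (x - ξ) ^ 2) / (2 * ξ ^ 2 * x)))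
      (Ioi 0) := by
    apply ContinuousOn.mul
    · apply ContinuousOn.sqrt
      apply ContinuousOn.div continuousOn_const (by fun_prop)
      intro x hx
      have hx' : (0:ℝ) < x := hx
      have := Real.pi_pos
      positivity
    · apply ContinuousOn.rexp
      apply ContinuousOn.div (by fun_prop) (by fun_prop)
      intro x hx
      have hx' : (0:ℝ) < x := hx
      positivity
  exact hc.congr fun x hx => by simp [invGaussPDF, mem_Ioi.mp hx]

/-- the key pointwise identity -/
lemma key_pointwise (hξ : 0 < ξ) (hδ : 0 < δ) {x : ℝ} (hx : 0 < x) (hne : x ≠ ξ) :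
    invGaussPDF ξ δ x = |δ * (x ^ 2 - ξ ^ 2) / (ξ ^ 2 * x ^ 2)| *
      (gammaPDFReal (1 / 2) (1 / 2) (δ * (x - ξ) ^ 2 / (ξ ^ 2 * x)) * (ξ / (x + ξ))) := by
  have hd : x - ξ ≠ 0 := sub_ne_zero.mpr hne
  have hy0 : 0 < δ * (x - ξ) ^ 2 / (ξ ^ 2 * x) := by positivity
  rw [invGaussPDF, if_pos hx, gammaPDFReal, if_pos hy0.le]
  have hpi := Real.pi_pos
  have hexp : -(δ * (x - ξ) ^ 2) / (2 * ξ ^ 2 * x)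
      = -((1:ℝ)/2 * (δ * (x - ξ) ^ 2 / (ξ ^ 2 * x))) := by
    field_simp
  rw [hexp]
  have hcoeff : Real.sqrt (δ / (2 * Real.pi * x ^ 3)) =
      |δ * (x ^ 2 - ξ ^ 2) / (ξ ^ 2 * x ^ 2)| *
        (((1:ℝ)/2) ^ ((1:ℝ)/2) / Real.Gamma (1/2) *
          (δ * (x - ξ) ^ 2 / (ξ ^ 2 * x)) ^ ((1:ℝ)/2 - 1) * (ξ / (x + ξ))) := by
    have hL : (0:ℝ) ≤ Real.sqrt (δ / (2 * Real.pi * x ^ 3)) := Real.sqrt_nonneg _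
    have hG : (0:ℝ) < Real.Gamma (1/2) := Real.Gamma_pos_of_pos (by norm_num)
    have hR : (0:ℝ) ≤ |δ * (x ^ 2 - ξ ^ 2) / (ξ ^ 2 * x ^ 2)| *
        (((1:ℝ)/2) ^ ((1:ℝ)/2) / Real.Gamma (1/2) *
          (δ * (x - ξ) ^ 2 / (ξ ^ 2 * x)) ^ ((1:ℝ)/2 - 1) * (ξ / (x + ξ))) := by
      have h1 : (0:ℝ) ≤ ((1:ℝ)/2) ^ ((1:ℝ)/2) := Real.rpow_nonneg (by norm_num) _
      have h2 : (0:ℝ) ≤ (δ * (x - ξ) ^ 2 / (ξ ^ 2 * x)) ^ ((1:ℝ)/2 - 1) :=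
        Real.rpow_nonneg hy0.le _
      have h3 : (0:ℝ) ≤ ξ / (x + ξ) := by positivity
      positivity
    rw [← sq_eq_sq₀ hL hR]
    rw [Real.sq_sqrt (by positivity)]
    simp only [mul_pow, div_pow, sq_abs]
    have e1 : (((1:ℝ)/2) ^ ((1:ℝ)/2)) ^ 2 = 1/2 := by
      rw [← Real.rpow_natCast (((1:ℝ)/2) ^ ((1:ℝ)/2)) 2, ← Real.rpow_mul (by norm_num)]
      norm_num
    have e2 : ((δ * (x - ξ) ^ 2 / (ξ ^ 2 * x)) ^ ((1:ℝ)/2 - 1)) ^ 2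
        = (δ * (x - ξ) ^ 2 / (ξ ^ 2 * x))⁻¹ := by
      rw [← Real.rpow_natCast ((δ * (x - ξ) ^ 2 / (ξ ^ 2 * x)) ^ ((1:ℝ)/2 - 1)) 2,
        ← Real.rpow_mul hy0.le]
      norm_num
      rw [Real.rpow_neg_one]
      field_simp
    have e3 : Real.Gamma (1/2) ^ 2 = Real.pi := by
      rw [Real.Gamma_one_half_eq, Real.sq_sqrt Real.pi_pos.le]
    rw [e1, e2, e3]
    have hxξ : x + ξ ≠ 0 := by positivity
    field_simp
    ring
  rw [hcoeff]
  ring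

end Aux

section Mass

variable {ξ δ : ℝ}

/-- the mass of `[igM t, igP t]` under the inverse Gaussian measure -/
lemma mass_Icc (hξ : 0 < ξ) (hδ : 0 < δ) {t : ℝ} (ht : 0 ≤ t) :
    (volume.withDensity fun x => ENNReal.ofReal (invGaussPDF ξ δ x))
        (Icc (igM ξ δ t) (igP ξ δ t))
      = ∫⁻ y in Ioc 0 t, gammaPDF (1/2) (1/2) y := by
  set G : ℝ → ℝ := fun x => δ * (x - ξ) ^ 2 / (ξ ^ 2 * x) with hG
  set GD : ℝ → ℝ := fun x => δ * (x ^ 2 - ξ ^ 2) / (ξ ^ 2 * x ^ 2) with hGD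
  set W : ℝ → ℝ := gammaPDFReal (1/2) (1/2) with hW
  have hm0 : 0 < igM ξ δ t := igM_pos hξ hδ ht
  have hmξ : igM ξ δ t ≤ ξ := igM_le_xi hξ hδ ht
  have hξp : ξ ≤ igP ξ δ t := igP_ge_xi hξ hδ ht
  have hIcc_sub : Icc (igM ξ δ t) (igP ξ δ t) ⊆ Ioi 0 := fun x hx => lt_of_lt_of_le hm0 hx.1
  have hψ_int : IntegrableOn (invGaussPDF ξ δ) (Icc (igM ξ δ t) (igP ξ δ t)) :=
    ((continuousOn_invGaussPDF hξ hδ).mono hIcc_sub).integrableOn_compact isCompact_Icc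
  -- branch lemmas
  have branch : ∀ s : Set ℝ, MeasurableSet s → s ⊆ Ioi 0 →
      (∀ x ∈ s, x ≠ ξ) → InjOn G s → ∀ R : ℝ → ℝ, (∀ x ∈ s, R (G x) = x) →
      IntegrableOn (invGaussPDF ξ δ) s →
      (∫ y in G '' s, W y * (ξ / (R y + ξ)) = ∫ x in s, invGaussPDF ξ δ x) ∧
      IntegrableOn (fun y => W y * (ξ / (R y + ξ))) (G '' s) := by
    intro s hs hs0 hsξ hinj R hR hint
    have hderiv : ∀ x ∈ s, HasDerivWithinAt G (GD x) s x := fun x hx =>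
      (hasDerivAt_formula hξ (hs0 hx)).hasDerivWithinAt
    have hpt : ∀ x ∈ s, |GD x| • (W (G x) * (ξ / (R (G x) + ξ))) = invGaussPDF ξ δ x := by
      intro x hx
      rw [hR x hx, smul_eq_mul]
      exact (key_pointwise hξ hδ (hs0 hx) (hsξ x hx)).symm
    constructor
    · rw [integral_image_eq_integral_abs_deriv_smul hs hderiv hinj]
      exact setIntegral_congr_fun hs hpt
    · rw [integrableOn_image_iff_integrableOn_abs_deriv_smul hs hderiv hinj]
      exact hint.congr_fun (fun x hx => (hpt x hx).symm) hs
  -- plus branch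
  have hsub_p : Ioo ξ (igP ξ δ t) ⊆ Ioi 0 := fun x hx => lt_trans hξ hx.1
  have hsub_m : Ioo (igM ξ δ t) ξ ⊆ Ioi 0 := fun x hx => lt_trans hm0 hx.1
  have hGpos : ∀ x : ℝ, 0 < x → x ≠ ξ → 0 < G x := by
    intro x hx hne
    have : x - ξ ≠ 0 := sub_ne_zero.mpr hne
    rw [hG]; positivity
  have himg_p : G '' Ioo ξ (igP ξ δ t) = Ioo 0 t := by
    ext y; constructor
    · rintro ⟨x, hx, rfl⟩
      refine ⟨hGpos x (hsub_p hx) (ne_of_gt hx.1), ?_⟩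
      have hq := ig_quad hξ hδ ht x
      have h1 : 0 < x - igM ξ δ t := by linarith [hx.1, hmξ]
      have h2 : x - igP ξ δ t < 0 := by linarith [hx.2]
      rw [hG, div_lt_iff₀ (mul_pos (pow_pos hξ 2) (hsub_p hx))]
      nlinarith [mul_pos hδ (mul_pos h1 (neg_pos.mpr h2))]
    · intro hy
      refine ⟨igP ξ δ y, ⟨xi_lt_igP hξ hδ hy.1, igP_strictMono hξ hδ hy.1.le hy.2⟩, ?_⟩
      exact g_igP hξ hδ hy.1.le
  have himg_m : G '' Ioo (igM ξ δ t) ξ = Ioo 0 t := by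
    ext y; constructor
    · rintro ⟨x, hx, rfl⟩
      refine ⟨hGpos x (hsub_m hx) (ne_of_lt hx.2), ?_⟩
      have hq := ig_quad hξ hδ ht x
      have h1 : 0 < x - igM ξ δ t := by linarith [hx.1]
      have h2 : x - igP ξ δ t < 0 := by linarith [hx.2, hξp]
      rw [hG, div_lt_iff₀ (mul_pos (pow_pos hξ 2) (hsub_m hx))]
      nlinarith [mul_pos hδ (mul_pos h1 (neg_pos.mpr h2))]
    · intro hy
      refine ⟨igM ξ δ y, ⟨igM_strictAnti hξ hδ hy.1.le hy.2, igM_lt_xi hξ hδ hy.1⟩, ?_⟩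
      exact g_igM hξ hδ hy.1.le
  have hR_p : ∀ x ∈ Ioo ξ (igP ξ δ t), igP ξ δ (G x) = x := by
    intro x hx
    have hx0 : 0 < x := hsub_p hx
    have hy0 : 0 < G x := hGpos x hx0 (ne_of_gt hx.1)
    rcases eq_root hξ hδ hy0.le hx0 rfl with h | h
    · exfalso; have := igM_lt_xi hξ hδ hy0; linarith [hx.1]
    · exact h.symm
  have hR_m : ∀ x ∈ Ioo (igM ξ δ t) ξ, igM ξ δ (G x) = x := by
    intro x hx
    have hx0 : 0 < x := hsub_m hx
    have hy0 : 0 < G x := hGpos x hx0 (ne_of_lt hx.2)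
    rcases eq_root hξ hδ hy0.le hx0 rfl with h | h
    · exact h.symm
    · exfalso; have := xi_lt_igP hξ hδ hy0; linarith [hx.2]
  have hinj_p : InjOn G (Ioo ξ (igP ξ δ t)) := by
    intro a ha b hb hab
    rw [← hR_p a ha, ← hR_p b hb, hab]
  have hinj_m : InjOn G (Ioo (igM ξ δ t) ξ) := by
    intro a ha b hb hab
    rw [← hR_m a ha, ← hR_m b hb, hab]
  have hint_p : IntegrableOn (invGaussPDF ξ δ) (Ioo ξ (igP ξ δ t)) :=
    hψ_int.mono_set (fun x hx => ⟨le_trans hmξ hx.1.le, hx.2.le⟩)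
  have hint_m : IntegrableOn (invGaussPDF ξ δ) (Ioo (igM ξ δ t) ξ) :=
    hψ_int.mono_set (fun x hx => ⟨hx.1.le, le_trans hx.2.le hξp⟩)
  obtain ⟨heq_p, hInt_p⟩ := branch _ measurableSet_Ioo hsub_p
    (fun x hx => ne_of_gt hx.1) hinj_p (igP ξ δ) hR_p hint_p
  obtain ⟨heq_m, hInt_m⟩ := branch _ measurableSet_Ioo hsub_m
    (fun x hx => ne_of_lt hx.2) hinj_m (igM ξ δ) hR_m hint_m
  rw [himg_p] at heq_p hInt_p
  rw [himg_m] at heq_m hInt_m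
  -- sum of the two branch integrands is W
  have hsum : ∀ y ∈ Ioo (0:ℝ) t,
      W y * (ξ / (igP ξ δ y + ξ)) + W y * (ξ / (igM ξ δ y + ξ)) = W y := by
    intro y hy
    have hmp := igM_mul_igP hξ hδ hy.1.le
    have hp := igP_pos hξ hδ hy.1.le
    have hm := igM_pos hξ hδ hy.1.le
    have h1 : igP ξ δ y + ξ ≠ 0 := by positivity
    have h2 : igM ξ δ y + ξ ≠ 0 := by positivity
    have : ξ / (igP ξ δ y + ξ) + ξ / (igM ξ δ y + ξ) = 1 := by
      field_simp
      nlinarith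
    calc W y * (ξ / (igP ξ δ y + ξ)) + W y * (ξ / (igM ξ δ y + ξ))
        = W y * (ξ / (igP ξ δ y + ξ) + ξ / (igM ξ δ y + ξ)) := by ring
      _ = W y := by rw [this, mul_one]
  have hW_int : IntegrableOn W (Ioo 0 t) :=
    IntegrableOn.congr_fun (hInt_p.add hInt_m) hsum measurableSet_Ioo
  -- the real integral identity
  have hreal : ∫ x in Icc (igM ξ δ t) (igP ξ δ t), invGaussPDF ξ δ x = ∫ y in Ioo 0 t, W y := by
    have hsplit : ∫ x in Icc (igM ξ δ t) (igP ξ δ t), invGaussPDF ξ δ x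
        = (∫ x in Ioo (igM ξ δ t) ξ, invGaussPDF ξ δ x)
          + ∫ x in Ioo ξ (igP ξ δ t), invGaussPDF ξ δ x := by
      rw [integral_Icc_eq_integral_Ioc, ← Ioc_union_Ioc_eq_Ioc hmξ hξp,
        setIntegral_union (Set.Ioc_disjoint_Ioc_of_le le_rfl) measurableSet_Ioc
          (hψ_int.mono_set (fun x hx => ⟨hx.1.le, le_trans hx.2 hξp⟩))
          (hψ_int.mono_set (fun x hx => ⟨le_trans hmξ hx.1.le, hx.2⟩)),
        integral_Ioc_eq_integral_Ioo, integral_Ioc_eq_integral_Ioo]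
    rw [hsplit, ← heq_p, ← heq_m, ← integral_add hInt_m hInt_p]
    exact setIntegral_congr_fun measurableSet_Ioo (fun y hy => by
      have := hsum y hy
      linarith)
  -- convert to lintegrals
  rw [withDensity_apply _ measurableSet_Icc]
  have hnn : 0 ≤ᵐ[volume.restrict (Icc (igM ξ δ t) (igP ξ δ t))] invGaussPDF ξ δ :=
    ae_of_all _ fun x => by
      unfold invGaussPDF
      split_ifs with h
      · positivity
      · exact le_rfl
  rw [← ofReal_integral_eq_lintegral_ofReal hψ_int hnn, hreal]
  have hW_int' : IntegrableOn W (Ioc 0 t) :=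
    hW_int.congr_set_ae Ioo_ae_eq_Ioc.symm
  have hWnn : 0 ≤ᵐ[volume.restrict (Ioc (0:ℝ) t)] W :=
    ae_of_all _ fun y => gammaPDFReal_nonneg (by norm_num) (by norm_num) y
  have : ∫⁻ y in Ioc 0 t, gammaPDF (1/2) (1/2) y
      = ENNReal.ofReal (∫ y in Ioc 0 t, W y) := by
    rw [ofReal_integral_eq_lintegral_ofReal hW_int' hWnn]
    rfl
  rw [this, integral_Ioc_eq_integral_Ioo]

end Mass

theorem invGauss_chiSq_pushforward (ξ δ : ℝ) (hξ : 0 < ξ) (hδ : 0 < δ)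
    (g : ℝ → ℝ) (hg : Measurable g)
    (hg_eq : ∀ x : ℝ, 0 < x → g x = δ * (x - ξ) ^ 2 / (ξ ^ 2 * x)) :
    Measure.map g (volume.withDensity (fun x => ENNReal.ofReal (invGaussPDF ξ δ x))) =
      gammaMeasure (1 / 2) (1 / 2) := by
  set μ := volume.withDensity (fun x => ENNReal.ofReal (invGaussPDF ξ δ x)) with hμ
  -- the measure gives no mass to (-∞, 0]
  have hIic0 : μ (Iic 0) = 0 := by
    rw [hμ, withDensity_apply _ measurableSet_Iic]
    have hz : ∀ᵐ x ∂(volume : Measure ℝ), x ∈ Iic (0:ℝ) →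
        ENNReal.ofReal (invGaussPDF ξ δ x) = (fun _ => (0:ENNReal)) x :=
      ae_of_all _ fun x (hx : x ≤ 0) => by simp [invGaussPDF, not_lt.mpr hx]
    rw [setLIntegral_congr_fun_ae measurableSet_Iic hz]
    simp
  have hnull : ∀ s : Set ℝ, s ⊆ Iic 0 → μ s = 0 := fun s hs =>
    measure_mono_null hs hIic0
  -- mass of preimages of Iic t for t ≥ 0
  have hpre : ∀ t : ℝ, 0 ≤ t → g ⁻¹' (Iic t) \ Iic 0 = Icc (igM ξ δ t) (igP ξ δ t) := by
    intro t ht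
    ext x
    simp only [mem_diff, mem_preimage, mem_Iic, not_le, mem_Icc, mem_Ioi]
    constructor
    · rintro ⟨hgx, hx0⟩
      rw [hg_eq x hx0] at hgx
      exact (le_iff_mem_Icc hξ hδ ht hx0).mp hgx
    · intro hx
      have hx0 : 0 < x := lt_of_lt_of_le (igM_pos hξ hδ ht) hx.1
      refine ⟨?_, hx0⟩
      rw [hg_eq x hx0]
      exact (le_iff_mem_Icc hξ hδ ht hx0).mpr hx
  -- finiteness of μ
  have hUnion : (⋃ n : ℕ, Icc (igM ξ δ (n : ℝ)) (igP ξ δ (n : ℝ))) = Ioi (0:ℝ) := by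
    apply Set.Subset.antisymm
    · intro x hx
      simp only [mem_iUnion] at hx
      obtain ⟨n, hn⟩ := hx
      exact lt_of_lt_of_le (igM_pos hξ hδ (Nat.cast_nonneg n)) hn.1
    · intro x hx
      have hx0 : (0:ℝ) < x := hx
      obtain ⟨n, hn⟩ := exists_nat_ge ((2 * δ / ξ ^ 2) * max x (ξ ^ 2 / x))
      simp only [mem_iUnion]
      refine ⟨n, ?_, ?_⟩
      · -- igM n ≤ x
        have hbig : max x (ξ ^ 2 / x) ≤ ξ ^ 2 * (n : ℝ) / (2 * δ) := by
          calc max x (ξ ^ 2 / x) = (2 * δ / ξ ^ 2) * max x (ξ ^ 2 / x) * (ξ ^ 2 / (2 * δ)) := by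
                field_simp
            _ ≤ (n : ℝ) * (ξ ^ 2 / (2 * δ)) := by
                gcongr
            _ = ξ ^ 2 * (n : ℝ) / (2 * δ) := by ring
        have hP : ξ ^ 2 / x ≤ igP ξ δ (n : ℝ) := by
          have h1 : ξ ^ 2 / x ≤ igB ξ δ (n : ℝ) := by
            have := le_max_right x (ξ ^ 2 / x)
            unfold igB; linarith [this.trans hbig]
          have h2 : (0:ℝ) ≤ igS ξ δ (n : ℝ) := igS_nonneg
          unfold igP; unfold igB at *; linarith
        have hPpos : 0 < igP ξ δ (n : ℝ) := igP_pos hξ hδ (Nat.cast_nonneg n)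
        rw [igM_eq hξ hδ (Nat.cast_nonneg n), div_le_iff₀ hPpos]
        have : ξ ^ 2 / x * x ≤ igP ξ δ (n : ℝ) * x := by
          exact mul_le_mul_of_nonneg_right hP hx0.le
        rw [div_mul_cancel₀ _ hx0.ne'] at this
        linarith
      · -- x ≤ igP n
        have h1 : x ≤ igB ξ δ (n : ℝ) := by
          have := le_max_left x (ξ ^ 2 / x)
          have hbig : max x (ξ ^ 2 / x) ≤ ξ ^ 2 * (n : ℝ) / (2 * δ) := by
            calc max x (ξ ^ 2 / x) = (2 * δ / ξ ^ 2) * max x (ξ ^ 2 / x) * (ξ ^ 2 / (2 * δ)) := by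
                  field_simp
              _ ≤ (n : ℝ) * (ξ ^ 2 / (2 * δ)) := by gcongr
              _ = ξ ^ 2 * (n : ℝ) / (2 * δ) := by ring
          unfold igB; linarith [this.trans hbig]
        have h2 : (0:ℝ) ≤ igS ξ δ (n : ℝ) := igS_nonneg
        unfold igP; linarith
  have hmono : Monotone (fun n : ℕ => Icc (igM ξ δ (n : ℝ)) (igP ξ δ (n : ℝ))) := by
    intro a b hab
    apply Icc_subset_Icc
    · exact igM_anti hξ hδ (Nat.cast_nonneg a) (Nat.cast_le.mpr hab)
    · exact igP_mono hξ hδ (Nat.cast_nonneg a) (Nat.cast_le.mpr hab)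
  have hIoi : μ (Ioi 0) ≤ 1 := by
    rw [← hUnion, hmono.measure_iUnion]
    apply iSup_le
    intro n
    rw [mass_Icc hξ hδ (Nat.cast_nonneg n)]
    calc ∫⁻ y in Ioc 0 (n : ℝ), gammaPDF (1/2) (1/2) y
        ≤ ∫⁻ y, gammaPDF (1/2) (1/2) y := setLIntegral_le_lintegral _ _
      _ = 1 := lintegral_gammaPDF_eq_one (by norm_num) (by norm_num)
  have hμfin : IsFiniteMeasure μ := by
    constructor
    rw [← Set.Iic_union_Ioi (a := (0:ℝ)),
      measure_union (Iic_disjoint_Ioi le_rfl) measurableSet_Ioi, hIic0, zero_add]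
    exact lt_of_le_of_lt hIoi ENNReal.one_lt_top
  haveI := hμfin
  haveI : IsFiniteMeasure (μ.map g) := Measure.isFiniteMeasure_map μ g
  apply MeasureTheory.Measure.ext_of_Iic
  intro t
  rw [Measure.map_apply hg measurableSet_Iic]
  rcases lt_or_ge t 0 with ht | ht
  · -- t < 0 : both sides are zero
    have hL : μ (g ⁻¹' Iic t) = 0 := by
      apply hnull
      intro x hx
      simp only [mem_preimage, mem_Iic] at hx
      by_contra hc
      simp only [mem_Iic, not_le] at hc
      rw [hg_eq x hc] at hx
      have : (0:ℝ) ≤ δ * (x - ξ) ^ 2 / (ξ ^ 2 * x) := by positivity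
      linarith
    rw [hL, gammaMeasure, withDensity_apply _ measurableSet_Iic]
    rw [setLIntegral_congr_fun_ae measurableSet_Iic
      (ae_of_all _ (fun y (hy : y ≤ t) => gammaPDF_of_neg (lt_of_le_of_lt hy ht)))]
    simp
  · -- 0 ≤ t
    rw [← measure_diff_null hIic0, hpre t ht, mass_Icc hξ hδ ht,
      gammaMeasure, withDensity_apply _ measurableSet_Iic,
      lintegral_Iic_eq_lintegral_Iio_add_Icc _ ht]
    rw [setLIntegral_congr_fun_ae measurableSet_Iio
      (ae_of_all _ (fun y (hy : y < 0) => gammaPDF_of_neg hy)), lintegral_zero, zero_add]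
    exact setLIntegral_congr Ioc_ae_eq_Icc
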